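/- Let μ₀ = N(M₀, S₀) and μ₁ = N(M₁, S₁) be nondegenerate multivariate Gaussian measures on ℝ^m with (M₀,S₀) ≠ (M₁,S₁), with densities f₀ and f₁. Then for every b ∈ (0,1) there exists κ > 0 such that μ₁({y ∈ ℝ^m : f₁(y) ≥ κ·f₀(y)}) = b. -/

import Mathlib

open Matrix MeasureTheory

noncomputable section

/-- Density of the multivariate Gaussian `N(M, S)` (for `S` positive definite) with
respect to Lebesgue measure. -/
def gaussDensity {m : ℕ} (M : Fin m → ℝ) (S : Matrix (Fin m) (Fin m) ℝ)
    (y : Fin m → ℝ) : ℝ :=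
  (2 * Real.pi) ^ (-(m : ℝ) / 2) * S.det ^ (-(1 : ℝ) / 2) *
    Real.exp (-((y - M) ⬝ᵥ S⁻¹.mulVec (y - M)) / 2)

/-- The nondegenerate multivariate Gaussian measure `N(M, S)` on `ℝ^m`. -/
def gaussMeasure {m : ℕ} (M : Fin m → ℝ) (S : Matrix (Fin m) (Fin m) ℝ) :
    Measure (Fin m → ℝ) :=
  volume.withDensity fun y => ENNReal.ofReal (gaussDensity M S y)

/-!
The log-likelihood ratio `q = log f₁ - log f₀` is, up to a constant, the difference of the two
quadratic forms `(y - Mᵢ)ᵀ Sᵢ⁻¹ (y - Mᵢ) / 2`. Since `(M₀, S₀) ≠ (M₁, S₁)` there is a direction `v`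
along which `q` restricts to a non-constant polynomial of degree at most two on every line, so by
Fubini every level set of `q` is Lebesgue-null, hence `μ₁`-null. The law of `q` under the
probability measure `μ₁` therefore has no atoms, its distribution function is continuous, and the
intermediate value theorem gives `t` with `μ₁ {q ≥ t} = b`; then `κ = exp t`.
-/

open Real Set ProbabilityTheory
open scoped ENNReal MatrixOrder

lemma continuous_cdf_of_nullSingletonClass (ν : Measure ℝ) [IsProbabilityMeasure ν]
    [NullSingletonClass ν] : Continuous (cdf ν) := by
  refine continuous_iff_continuousAt.2 fun t => ?_
  rw [(monotone_cdf ν).continuousAt_iff_leftLim_eq_rightLim, StieltjesFunction.rightLim_eq]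
  have hjump := (cdf ν).measure_singleton t
  rw [measure_cdf, measure_singleton, eq_comm, ENNReal.ofReal_eq_zero] at hjump
  linarith [(monotone_cdf ν).leftLim_le (le_refl t)]

lemma exists_measure_Ici_eq (ν : Measure ℝ) [IsProbabilityMeasure ν] [NullSingletonClass ν]
    {b : ℝ} (hb : b ∈ Ioo (0 : ℝ) 1) : ∃ t, ν (Ici t) = ENNReal.ofReal b := by
  obtain ⟨a₁, ha₁⟩ := ((tendsto_cdf_atBot ν).eventually_lt_const (sub_pos.2 hb.2)).exists
  obtain ⟨a₂, ha₂⟩ := ((tendsto_cdf_atTop ν).eventually_const_lt (sub_lt_self 1 hb.1)).exists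
  obtain ⟨t, ht⟩ := intermediate_value_univ a₁ a₂ (continuous_cdf_of_nullSingletonClass ν)
    ⟨ha₁.le, ha₂.le⟩
  refine ⟨t, ?_⟩
  rw [← compl_Iio, prob_compl_eq_one_sub measurableSet_Iio, measure_congr Iio_ae_eq_Iic,
    ← ofReal_cdf, ht, ← ENNReal.ofReal_one, ← ENNReal.ofReal_sub _ (sub_nonneg.2 hb.2.le),
    sub_sub_cancel]

lemma measure_eq_zero_of_forall_line_null {E : Type*} [NormedAddCommGroup E] [NormedSpace ℝ E]
    [MeasurableSpace E] [BorelSpace E] [SecondCountableTopology E]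
    (μ : Measure E) [SFinite μ] [μ.IsAddRightInvariant] (v : E) {A : Set E}
    (hA : MeasurableSet A) (hline : ∀ x, volume {s : ℝ | x + s • v ∈ A} = 0) : μ A = 0 := by
  set T := {p : ℝ × E | p.2 + p.1 • v ∈ A}
  have hT : MeasurableSet T := (measurable_snd.add (measurable_fst.smul measurable_const)) hA
  -- Fubini on `T`: every horizontal slice is a translate of `A`, every vertical one is null.
  have h : μ A * ∞ = 0 := calc
    μ A * ∞ = ∫⁻ s : ℝ, μ (Prod.mk s ⁻¹' T) := by
      have hslice (s : ℝ) : μ (Prod.mk s ⁻¹' T) = μ A := measure_preimage_add_right μ (s • v) A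
      simp [hslice, mul_comm]
    _ = (volume.prod μ) T := (Measure.prod_apply hT).symm
    _ = ∫⁻ x, volume ((fun s : ℝ => (s, x)) ⁻¹' T) ∂μ := Measure.prod_apply_symm hT
    _ = 0 := by simp [T, hline]
  simpa using h

open Polynomial in
lemma finite_setOf_quadratic_eq_zero {R : Type*} [CommRing R] [IsDomain R] {a b c : R}
    (h : a ≠ 0 ∨ b ≠ 0) : {s : R | a * s ^ 2 + b * s + c = 0}.Finite := by
  have hp : C a * X ^ 2 + C b * X + C c ≠ 0 := by
    intro hp
    have h2 := congrArg (coeff · 2) hp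
    have h1 := congrArg (coeff · 1) hp
    simp only [coeff_add, coeff_C_mul, coeff_X_pow, coeff_X, coeff_C, coeff_zero] at h1 h2
    norm_num at h1 h2
    tauto
  simpa using Polynomial.finite_setOfPred_isRoot hp

lemma measure_preimage_singleton_eq_zero_of_quadratic_on_lines {E : Type*} [NormedAddCommGroup E]
    [NormedSpace ℝ E] [MeasurableSpace E] [BorelSpace E] [SecondCountableTopology E]
    (μ : Measure E) [SFinite μ] [μ.IsAddRightInvariant] {f : E → ℝ} (hf : Measurable f) (v : E)
    (hline : ∀ x, ∃ a b c : ℝ, (a ≠ 0 ∨ b ≠ 0) ∧ ∀ s, f (x + s • v) = a * s ^ 2 + b * s + c)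
    (t : ℝ) : μ (f ⁻¹' {t}) = 0 := by
  refine measure_eq_zero_of_forall_line_null μ v (hf (measurableSet_singleton t)) fun x => ?_
  obtain ⟨a, b, c, hab, hx⟩ := hline x
  refine Set.Finite.measure_zero ((finite_setOf_quadratic_eq_zero (c := c - t) hab).subset ?_) _
  intro s hs
  simp only [mem_ofPred_eq, mem_preimage, mem_singleton_iff, hx] at hs ⊢
  linarith

section QuadraticForm

variable {n R : Type*} [Fintype n]

lemma dotProduct_mulVec_add_smul [CommRing R] {B : Matrix n n R} (hB : B.IsSymm) (x v : n → R)
    (s : R) : (x + s • v) ⬝ᵥ B *ᵥ (x + s • v) =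
      x ⬝ᵥ B *ᵥ x + 2 * (v ⬝ᵥ B *ᵥ x) * s + (v ⬝ᵥ B *ᵥ v) * s ^ 2 := by
  have hcomm : x ⬝ᵥ B *ᵥ v = v ⬝ᵥ B *ᵥ x := by
    rw [dotProduct_mulVec, dotProduct_comm, ← mulVec_transpose, hB.eq]
  simp only [mulVec_add, mulVec_smul, add_dotProduct, dotProduct_add, smul_dotProduct,
    dotProduct_smul, smul_eq_mul, hcomm]
  ring

lemma exists_dotProduct_mulVec_self_ne_zero [DecidableEq n] [Field R] [CharZero R]
    {B : Matrix n n R} (hB : B.IsSymm) (h : B ≠ 0) : ∃ v, v ⬝ᵥ B *ᵥ v ≠ 0 := by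
  by_contra! hzero
  refine h (ext fun i j => ?_)
  have hdiag (k : n) : B k k = 0 := by simpa using hzero (Pi.single k 1)
  have hpolar := hzero (Pi.single j 1 + (1 : R) • Pi.single i 1)
  rw [dotProduct_mulVec_add_smul hB] at hpolar
  simpa [hdiag] using hpolar

lemma measure_setOf_quadForm_sub_quadForm_eq [DecidableEq n] (μ : Measure (n → ℝ)) [SFinite μ]
    [μ.IsAddRightInvariant] {M₀ M₁ : n → ℝ} {B₀ B₁ : Matrix n n ℝ} (hB₀ : B₀.IsSymm)
    (hB₁ : B₁.IsSymm) (hB₁u : IsUnit B₁) (hne : (M₀, B₀) ≠ (M₁, B₁)) (t : ℝ) :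
    μ {y | (y - M₀) ⬝ᵥ B₀ *ᵥ (y - M₀) - (y - M₁) ⬝ᵥ B₁ *ᵥ (y - M₁) = t} = 0 := by
  set Q := fun y => (y - M₀) ⬝ᵥ B₀ *ᵥ (y - M₀) - (y - M₁) ⬝ᵥ B₁ *ᵥ (y - M₁)
  have hline (v x : n → ℝ) (s : ℝ) : Q (x + s • v) = (v ⬝ᵥ B₀ *ᵥ v - v ⬝ᵥ B₁ *ᵥ v) * s ^ 2 +
      2 * (v ⬝ᵥ B₀ *ᵥ (x - M₀) - v ⬝ᵥ B₁ *ᵥ (x - M₁)) * s + Q x := by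
    simp only [Q, add_sub_right_comm x, dotProduct_mulVec_add_smul hB₀,
      dotProduct_mulVec_add_smul hB₁]
    ring
  suffices ∃ v, ∀ x, v ⬝ᵥ B₀ *ᵥ v - v ⬝ᵥ B₁ *ᵥ v ≠ 0 ∨
      2 * (v ⬝ᵥ B₀ *ᵥ (x - M₀) - v ⬝ᵥ B₁ *ᵥ (x - M₁)) ≠ 0 by
    obtain ⟨v, hv⟩ := this
    exact measure_preimage_singleton_eq_zero_of_quadratic_on_lines μ
      (by fun_prop : Continuous Q).measurable v (fun x => ⟨_, _, _, hv x, hline v x⟩) t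
  by_cases hB : B₀ = B₁
  · subst hB
    have hM : M₁ - M₀ ≠ 0 := sub_ne_zero.2 fun h => hne (by rw [h])
    -- along `v = B₀ (M₁ - M₀)` the linear coefficient is the constant `2 ‖v‖²`
    have hv : B₀ *ᵥ (M₁ - M₀) ≠ 0 := fun h0 =>
      hM (mulVec_injective_of_isUnit hB₁u (h0.trans (mulVec_zero B₀).symm))
    refine ⟨B₀ *ᵥ (M₁ - M₀), fun x => Or.inr ?_⟩
    rw [← dotProduct_sub, ← mulVec_sub, sub_sub_sub_cancel_left]
    simpa [dotProduct_self_eq_zero] using hv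
  · obtain ⟨v, hv⟩ := exists_dotProduct_mulVec_self_ne_zero (hB₀.sub hB₁) (sub_ne_zero.2 hB)
    exact ⟨v, fun _ => Or.inl (by rwa [sub_mulVec, dotProduct_sub] at hv)⟩

end QuadraticForm

section Gaussian

variable {n : Type*} [Fintype n]

lemma lintegral_comp_mulVec [DecidableEq n] {B : Matrix n n ℝ} (hB : B.det ≠ 0)
    {f : (n → ℝ) → ℝ≥0∞} (hf : Measurable f) :
    ∫⁻ x, f (B *ᵥ x) = ENNReal.ofReal |B.det⁻¹| * ∫⁻ x, f x := by
  rw [← smul_eq_mul, ← lintegral_smul_measure, ← Real.map_matrix_volume_pi_eq_smul_volume_pi hB,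
    lintegral_map hf (toLin' B).continuous_of_finiteDimensional.measurable]
  rfl

lemma lintegral_ofReal_exp_neg_dotProduct_self_div_two :
    ∫⁻ x : n → ℝ, ENNReal.ofReal (exp (-(x ⬝ᵥ x) / 2)) =
      ENNReal.ofReal (√(2 * π) ^ Fintype.card n) := by
  have hprod (x : n → ℝ) : exp (-(x ⬝ᵥ x) / 2) = ∏ i, exp (-(1 / 2) * x i ^ 2) := by
    rw [← exp_sum, dotProduct, ← Finset.sum_neg_distrib, Finset.sum_div]
    exact congrArg exp (Finset.sum_congr rfl fun i _ => by ring)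
  have hint : Integrable fun x : n → ℝ => ∏ i, exp (-(1 / 2) * x i ^ 2) :=
    Integrable.fintype_prod fun _ => integrable_exp_neg_mul_sq (by norm_num)
  simp_rw [hprod]
  rw [← ofReal_integral_eq_lintegral_ofReal hint (.of_forall fun _ => by positivity),
    integral_fintype_prod_volume_eq_pow (fun t : ℝ => exp (-(1 / 2) * t ^ 2)), integral_gaussian]
  norm_num [div_div_eq_mul_div, mul_comm]

lemma lintegral_ofReal_exp_neg_quadForm_div_two [DecidableEq n] {S : Matrix n n ℝ}
    (hS : S.PosDef) :
    ∫⁻ z : n → ℝ, ENNReal.ofReal (exp (-(z ⬝ᵥ S⁻¹ *ᵥ z) / 2)) =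
      ENNReal.ofReal (√(2 * π) ^ Fintype.card n * √S.det) := by
  obtain ⟨B, hB⟩ := CStarAlgebra.nonneg_iff_eq_star_mul_self.mp hS.inv.posSemidef.nonneg
  have hquad (z : n → ℝ) : z ⬝ᵥ S⁻¹ *ᵥ z = B *ᵥ z ⬝ᵥ B *ᵥ z := by
    rw [hB, ← mulVec_mulVec, dotProduct_mulVec, star_eq_conjTranspose,
      conjTranspose_eq_transpose_of_trivial, vecMul_transpose]
  have hdet : S.det⁻¹ = B.det ^ 2 := by
    rw [← Ring.inverse_eq_inv, ← det_nonsing_inv, hB, det_mul, star_eq_conjTranspose,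
      conjTranspose_eq_transpose_of_trivial, det_transpose, sq]
  have hB0 : B.det ≠ 0 := fun h0 => by simp [h0, hS.det_pos.ne'] at hdet
  simp_rw [hquad]
  rw [lintegral_comp_mulVec hB0 (f := fun x => ENNReal.ofReal (exp (-(x ⬝ᵥ x) / 2)))
    (by fun_prop), lintegral_ofReal_exp_neg_dotProduct_self_div_two,
    ← ENNReal.ofReal_mul (abs_nonneg _), mul_comm]
  congr 2
  rw [abs_inv, ← sqrt_sq_eq_abs, ← hdet, sqrt_inv, inv_inv]

end Gaussian

section GaussDensity

variable {m : ℕ}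

lemma gaussDensity_pos (M : Fin m → ℝ) {S : Matrix (Fin m) (Fin m) ℝ} (hS : 0 < S.det)
    (y : Fin m → ℝ) : 0 < gaussDensity M S y := by
  unfold gaussDensity
  have := rpow_pos_of_pos hS (-1 / 2)
  positivity

lemma continuous_gaussDensity (M : Fin m → ℝ) (S : Matrix (Fin m) (Fin m) ℝ) :
    Continuous (gaussDensity M S) := by
  unfold gaussDensity
  fun_prop

lemma log_gaussDensity (M : Fin m → ℝ) {S : Matrix (Fin m) (Fin m) ℝ} (hS : 0 < S.det)
    (y : Fin m → ℝ) : log (gaussDensity M S y) =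
      log ((2 * π) ^ (-(m : ℝ) / 2) * S.det ^ (-(1 : ℝ) / 2)) - (y - M) ⬝ᵥ S⁻¹ *ᵥ (y - M) / 2 := by
  have := rpow_pos_of_pos hS (-1 / 2)
  rw [gaussDensity, log_mul (by positivity) (exp_pos _).ne', log_exp]
  ring

lemma lintegral_gaussDensity (M : Fin m → ℝ) {S : Matrix (Fin m) (Fin m) ℝ} (hS : S.PosDef) :
    ∫⁻ y, ENNReal.ofReal (gaussDensity M S y) = 1 := by
  have hdet := hS.det_pos
  have hconst : 0 ≤ (2 * π) ^ (-(m : ℝ) / 2) * S.det ^ (-(1 : ℝ) / 2) := by positivity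
  simp_rw [gaussDensity, ENNReal.ofReal_mul hconst]
  rw [lintegral_const_mul _ (by fun_prop),
    lintegral_sub_right_eq_self (fun z => ENNReal.ofReal (exp (-(z ⬝ᵥ S⁻¹ *ᵥ z) / 2))) M,
    lintegral_ofReal_exp_neg_quadForm_div_two hS, ← ENNReal.ofReal_mul hconst,
    ENNReal.ofReal_eq_one, Fintype.card_fin]
  rw [sqrt_eq_rpow, sqrt_eq_rpow, ← rpow_natCast, ← rpow_mul (by positivity), mul_mul_mul_comm,
    ← rpow_add (by positivity), ← rpow_add hdet]
  ring_nf
  simp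

end GaussDensity

lemma isProbabilityMeasure_gaussMeasure {m : ℕ} (M : Fin m → ℝ) {S : Matrix (Fin m) (Fin m) ℝ}
    (hS : S.PosDef) : IsProbabilityMeasure (gaussMeasure M S) :=
  ⟨by rw [gaussMeasure, withDensity_apply _ .univ, setLIntegral_univ, lintegral_gaussDensity M hS]⟩

lemma volume_setOf_log_gaussDensity_sub_eq {m : ℕ} {M₀ M₁ : Fin m → ℝ}
    {S₀ S₁ : Matrix (Fin m) (Fin m) ℝ} (hS₀ : S₀.PosDef) (hS₁ : S₁.PosDef)
    (hne : (M₀, S₀) ≠ (M₁, S₁)) (t : ℝ) :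
    volume {y | log (gaussDensity M₁ S₁ y) - log (gaussDensity M₀ S₀ y) = t} = 0 := by
  have hsymm {S : Matrix (Fin m) (Fin m) ℝ} (hS : S.PosDef) : S⁻¹.IsSymm :=
    isHermitian_iff_isSymm.mp hS.inv.isHermitian
  have hne' : (M₀, S₀⁻¹) ≠ (M₁, S₁⁻¹) := fun h => hne <| by
    rw [Prod.mk.injEq] at h ⊢
    exact ⟨h.1, inv_inj h.2 hS₀.det_pos.ne'.isUnit⟩
  set C₀ := log ((2 * π) ^ (-(m : ℝ) / 2) * S₀.det ^ (-(1 : ℝ) / 2)) with hC₀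
  set C₁ := log ((2 * π) ^ (-(m : ℝ) / 2) * S₁.det ^ (-(1 : ℝ) / 2)) with hC₁
  convert measure_setOf_quadForm_sub_quadForm_eq volume (hsymm hS₀) (hsymm hS₁) hS₁.inv.isUnit
    hne' (2 * (t - C₁ + C₀)) using 2
  ext y
  simp only [mem_ofPred_eq, log_gaussDensity _ hS₀.det_pos, log_gaussDensity _ hS₁.det_pos, ← hC₀,
    ← hC₁]
  constructor <;> intro h <;> linarith

/-- For nondegenerate Gaussian measures `μ₀ = N(M₀,S₀)` and `μ₁ = N(M₁,S₁)`
on `ℝ^m` with `(M₀,S₀) ≠ (M₁,S₁)` and densities `f₀, f₁`, for every `b ∈ (0,1)` there is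
`κ > 0` with `μ₁({y : f₁(y) ≥ κ·f₀(y)}) = b`. -/
theorem stmt7 {m : ℕ} (M0 M1 : Fin m → ℝ) (S0 S1 : Matrix (Fin m) (Fin m) ℝ)
    (hS0 : S0.PosDef) (hS1 : S1.PosDef) (hne : (M0, S0) ≠ (M1, S1))
    (b : ℝ) (hb : b ∈ Set.Ioo (0 : ℝ) 1) :
    ∃ κ : ℝ, 0 < κ ∧
      gaussMeasure M1 S1 {y | gaussDensity M1 S1 y ≥ κ * gaussDensity M0 S0 y} =
        ENNReal.ofReal b := by
  have := isProbabilityMeasure_gaussMeasure M1 hS1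
  set q := fun y => log (gaussDensity M1 S1 y) - log (gaussDensity M0 S0 y)
  have hq : Measurable q := ((continuous_gaussDensity M1 S1).measurable.log).sub
    (continuous_gaussDensity M0 S0).measurable.log
  have : IsProbabilityMeasure ((gaussMeasure M1 S1).map q) :=
    Measure.isProbabilityMeasure_map hq.aemeasurable
  have : NullSingletonClass ((gaussMeasure M1 S1).map q) := ⟨fun t => by
    rw [Measure.map_apply hq (measurableSet_singleton t)]
    exact withDensity_absolutelyContinuous _ _
      (volume_setOf_log_gaussDensity_sub_eq hS0 hS1 hne t)⟩
  obtain ⟨t, ht⟩ := exists_measure_Ici_eq ((gaussMeasure M1 S1).map q) hb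
  refine ⟨exp t, exp_pos t, ?_⟩
  have hlevel : {y | gaussDensity M1 S1 y ≥ exp t * gaussDensity M0 S0 y} = q ⁻¹' Ici t := by
    ext y
    have hf₀ := gaussDensity_pos M0 hS0.det_pos y
    have hf₁ := gaussDensity_pos M1 hS1.det_pos y
    rw [mem_ofPred_eq, ge_iff_le, ← log_le_log_iff (by positivity) hf₁,
      log_mul (exp_ne_zero t) hf₀.ne', log_exp, mem_preimage, mem_Ici, le_sub_iff_add_le]
  rwa [hlevel, ← Measure.map_apply hq measurableSet_Ici]

end
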